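/- arXiv:1203.3786 — 3 statements merged into one kernel-verified Lean document; each statement's English description precedes it below -/
import Mathlib

section
/- For n ≥ 1, the number of 2-colored set partitions of [n] avoiding the three patterns 1^1 1^1, 1^1 1^2, and 1^2 2^1 in the pattern sense equals 2n. -/
/-- `i` and `j` lie in the same block of the set partition `P`. -/
def SameBlock {n : ℕ} (P : Finpartition (Finset.univ : Finset (Fin n))) (i j : Fin n) : Prop :=
  ∃ b ∈ P.parts, i ∈ b ∧ j ∈ b

/-- A `k`-colored set partition of `[n]`: a set partition of `Fin n` together with a
color from `Fin k` for each element. -/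
structure CPart (n k : ℕ) where
  part : Finpartition (Finset.univ : Finset (Fin n))
  col : Fin n → Fin k

/-- Contains the pattern 1^1 1^1 : two elements of the same block with equal colors. -/
def Has11 {n k : ℕ} (σ : CPart n k) : Prop :=
  ∃ i j : Fin n, i < j ∧ SameBlock σ.part i j ∧ σ.col i = σ.col j

/-- Contains the pattern 1^1 1^2 : same block, smaller element has strictly smaller color. -/
def Has112 {n k : ℕ} (σ : CPart n k) : Prop :=
  ∃ i j : Fin n, i < j ∧ SameBlock σ.part i j ∧ σ.col i < σ.col j

/-- Contains the pattern 1^2 1^1 : same block, smaller element has strictly larger color. -/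
def Has121 {n k : ℕ} (σ : CPart n k) : Prop :=
  ∃ i j : Fin n, i < j ∧ SameBlock σ.part i j ∧ σ.col j < σ.col i

/-- Contains the pattern 1^1 2^1 : different blocks, equal colors. -/
def Has1121 {n k : ℕ} (σ : CPart n k) : Prop :=
  ∃ i j : Fin n, i < j ∧ ¬ SameBlock σ.part i j ∧ σ.col i = σ.col j

/-- Contains the pattern 1^1 2^2 : different blocks, smaller element has strictly smaller color. -/
def Has1122 {n k : ℕ} (σ : CPart n k) : Prop :=
  ∃ i j : Fin n, i < j ∧ ¬ SameBlock σ.part i j ∧ σ.col i < σ.col j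

/-- Contains the pattern 1^2 2^1 : different blocks, smaller element has strictly larger color. -/
def Has1221 {n k : ℕ} (σ : CPart n k) : Prop :=
  ∃ i j : Fin n, i < j ∧ ¬ SameBlock σ.part i j ∧ σ.col j < σ.col i

/-- The Bell number: the number of set partitions of an `m`-element set. -/
noncomputable def bell (m : ℕ) : ℕ := Nat.card (Finpartition (Finset.univ : Finset (Fin m)))

section helpers
variable {n : ℕ} {P Q : Finpartition (Finset.univ : Finset (Fin n))}

lemma sb_refl (i : Fin n) : SameBlock P i i :=
  ⟨P.part i, P.part_mem.2 (Finset.mem_univ i), P.mem_part (Finset.mem_univ i),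
    P.mem_part (Finset.mem_univ i)⟩

lemma sb_symm {i j : Fin n} (h : SameBlock P i j) : SameBlock P j i := by
  obtain ⟨b, hb, hi, hj⟩ := h; exact ⟨b, hb, hj, hi⟩

lemma sb_trans {i j k : Fin n} (h : SameBlock P i j) (h' : SameBlock P j k) :
    SameBlock P i k := by
  obtain ⟨b, hb, hi, hj⟩ := h
  obtain ⟨c, hc, hj', hk⟩ := h'
  exact ⟨b, hb, hi, (P.eq_of_mem_parts hb hc hj hj') ▸ hk⟩

lemma sb_iff_mem_part {i j : Fin n} : SameBlock P i j ↔ j ∈ P.part i := by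
  constructor
  · rintro ⟨b, hb, hi, hj⟩
    rwa [P.eq_of_mem_parts (P.part_mem.2 (Finset.mem_univ i)) hb
      (P.mem_part (Finset.mem_univ i)) hi]
  · intro h
    exact ⟨P.part i, P.part_mem.2 (Finset.mem_univ i), P.mem_part (Finset.mem_univ i), h⟩

lemma sb_ofSetoid {s : Setoid (Fin n)} [DecidableRel s.r] {i j : Fin n} :
    SameBlock (Finpartition.ofSetoid s) i j ↔ s.r i j := by
  rw [sb_iff_mem_part, Finpartition.mem_part_ofSetoid_iff_rel]

lemma parts_subset_of_sb (h : ∀ i j, SameBlock P i j ↔ SameBlock Q i j) :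
    P.parts ⊆ Q.parts := by
  intro b hb
  have hne : b.Nonempty := Finset.nonempty_iff_ne_empty.2 (by
    rintro rfl; exact P.bot_notMem hb)
  obtain ⟨x, hx⟩ := hne
  have hbp : b = P.part x :=
    P.eq_of_mem_parts hb (P.part_mem.2 (Finset.mem_univ x)) hx (P.mem_part (Finset.mem_univ x))
  have : b = Q.part x := by
    ext y
    rw [hbp, ← sb_iff_mem_part, ← sb_iff_mem_part]
    exact h x y
  rw [this]
  exact Q.part_mem.2 (Finset.mem_univ x)

lemma finpartition_eq_of_sb (h : ∀ i j, SameBlock P i j ↔ SameBlock Q i j) : P = Q := by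
  ext b
  constructor
  · apply parts_subset_of_sb h
  · apply parts_subset_of_sb fun i j => (h i j).symm

end helpers

/-- The equality setoid. -/
def eqS (n : ℕ) : Setoid (Fin n) := ⟨Eq, ⟨fun _ => rfl, Eq.symm, Eq.trans⟩⟩

instance {n : ℕ} : DecidableRel (eqS n).r := fun a b => inferInstanceAs (Decidable (a = b))

/-- Setoid whose only nontrivial class is `{a, b}`. -/
def pairS (n : ℕ) (a b : Fin n) : Setoid (Fin n) :=
  ⟨fun x y => x = y ∨ (x = a ∧ y = b) ∨ (x = b ∧ y = a), by
    refine ⟨fun x => Or.inl rfl, ?_, ?_⟩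
    · rintro x y (rfl | ⟨rfl, rfl⟩ | ⟨rfl, rfl⟩) <;> tauto
    · rintro x y z (rfl | ⟨rfl, rfl⟩ | ⟨rfl, rfl⟩) (h | ⟨h, h'⟩ | ⟨h, h'⟩) <;> subst_vars <;> tauto⟩

instance {n : ℕ} {a b : Fin n} : DecidableRel (pairS n a b).r :=
  fun x y => inferInstanceAs (Decidable (_ ∨ _))

/-- Colored partition: all singletons, colors `0` below `m`, then `1`. -/
def cpA (n : ℕ) (m : ℕ) : CPart n 2 :=
  ⟨Finpartition.ofSetoid (eqS n), fun x => if x.val < m then 0 else 1⟩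

/-- Colored partition: one doubleton block `{a, a+1}`. -/
def cpB (n : ℕ) (a : ℕ) (h : a + 1 < n) : CPart n 2 :=
  ⟨Finpartition.ofSetoid (pairS n ⟨a, Nat.lt_of_succ_lt h⟩ ⟨a + 1, h⟩),
    fun x => if x.val < a ∨ x.val = a + 1 then 0 else 1⟩

lemma fin2_cases (c : Fin 2) : c = 0 ∨ c = 1 := by omega
lemma fin2_lt {c d : Fin 2} (h : c < d) : c = 0 ∧ d = 1 := by omega

lemma sb_cpA {n : ℕ} {m : ℕ} {i j : Fin n} : SameBlock (cpA n m).part i j ↔ i = j :=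
  sb_ofSetoid

lemma sb_cpB {n : ℕ} {a : ℕ} {h : a + 1 < n} {i j : Fin n} :
    SameBlock (cpB n a h).part i j ↔
      i = j ∨ (i = ⟨a, Nat.lt_of_succ_lt h⟩ ∧ j = ⟨a + 1, h⟩) ∨
        (i = ⟨a + 1, h⟩ ∧ j = ⟨a, Nat.lt_of_succ_lt h⟩) :=
  sb_ofSetoid




lemma avoidA {n m : ℕ} : ¬ Has11 (cpA n m) ∧ ¬ Has112 (cpA n m) ∧ ¬ Has1221 (cpA n m) := by
  refine ⟨?_, ?_, ?_⟩
  · rintro ⟨i, j, hij, hsb, -⟩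
    exact absurd (sb_cpA.1 hsb) hij.ne
  · rintro ⟨i, j, hij, hsb, -⟩
    exact absurd (sb_cpA.1 hsb) hij.ne
  · rintro ⟨i, j, hij, -, hlt⟩
    have hij' : i.val < j.val := hij
    simp only [cpA] at hlt
    split_ifs at hlt with h1 h2 h2 <;> first | exact absurd hlt (by decide) | omega

lemma avoidB {n a : ℕ} (h : a + 1 < n) :
    ¬ Has11 (cpB n a h) ∧ ¬ Has112 (cpB n a h) ∧ ¬ Has1221 (cpB n a h) := by
  have colval : ∀ x : Fin n, (cpB n a h).col x = if x.val < a ∨ x.val = a + 1 then 0 else 1 :=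
    fun x => rfl
  have key : ∀ i j : Fin n, i < j → SameBlock (cpB n a h).part i j →
      (cpB n a h).col i = 1 ∧ (cpB n a h).col j = 0 := by
    intro i j hij hsb
    rcases sb_cpB.1 hsb with rfl | ⟨rfl, rfl⟩ | ⟨rfl, rfl⟩
    · exact absurd hij (lt_irrefl _)
    · constructor
      · rw [colval]; simp
      · rw [colval]; simp
    · exact absurd hij (by simp [Fin.lt_iff_val_lt_val])
  refine ⟨?_, ?_, ?_⟩
  · rintro ⟨i, j, hij, hsb, heq⟩
    obtain ⟨h1, h2⟩ := key i j hij hsb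
    rw [h1, h2] at heq; exact absurd heq (by decide)
  · rintro ⟨i, j, hij, hsb, hlt⟩
    obtain ⟨h1, h2⟩ := key i j hij hsb
    rw [h1, h2] at hlt; exact absurd hlt (by decide)
  · rintro ⟨i, j, hij, hns, hlt⟩
    have hij' : i.val < j.val := hij
    rw [colval, colval] at hlt
    split_ifs at hlt with h1 h2 h2
    · exact absurd hlt (by decide)
    · -- col j = 0, col i = 1
      rcases h1 with hja | hja
      · exact h2 (Or.inl (by omega))
      · have hia : i.val = a := by omega
        apply hns
        rw [sb_cpB]
        exact Or.inr (Or.inl ⟨Fin.ext hia, Fin.ext hja⟩)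
    · exact absurd hlt (by decide)
    · exact absurd hlt (by decide)

lemma colA {n m : ℕ} (x : Fin n) : (cpA n m).col x = if x.val < m then 0 else 1 := rfl
lemma colB {n a : ℕ} (h : a + 1 < n) (x : Fin n) :
    (cpB n a h).col x = if x.val < a ∨ x.val = a + 1 then 0 else 1 := rfl

lemma injAA {n : ℕ} {m m' : ℕ} (hm : m ≤ n) (hm' : m' ≤ n) (h : cpA n m = cpA n m') :
    m = m' := by
  by_contra hne
  have hc : ∀ x : Fin n, (cpA n m).col x = (cpA n m').col x := fun x => by rw [h]
  rcases Nat.lt_or_ge m m' with hlt | hge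
  · have := hc ⟨m, lt_of_lt_of_le hlt hm'⟩
    rw [colA, colA] at this
    simp only [lt_irrefl, if_false, hlt, if_true] at this
    exact absurd this (by decide)
  · have hlt : m' < m := lt_of_le_of_ne hge (Ne.symm hne)
    have := hc ⟨m', lt_of_lt_of_le hlt hm⟩
    rw [colA, colA] at this
    simp only [lt_irrefl, if_false, hlt, if_true] at this
    exact absurd this (by decide)

lemma injAB {n m a : ℕ} (h : a + 1 < n) (heq : cpA n m = cpB n a h) : False := by
  have hc : ∀ x : Fin n, (cpA n m).col x = (cpB n a h).col x := fun x => by rw [heq]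
  have h1 := hc ⟨a, Nat.lt_of_succ_lt h⟩
  have h2 := hc ⟨a + 1, h⟩
  rw [colA, colB] at h1 h2
  simp only [Fin.val_mk, lt_self_iff_false, false_or, or_true, if_true,
    left_eq_add, Nat.one_ne_zero, if_false] at h1 h2
  split_ifs at h1 h2 <;> omega

lemma injBB {n a a' : ℕ} (h : a + 1 < n) (h' : a' + 1 < n)
    (heq : cpB n a h = cpB n a' h') : a = a' := by
  by_contra hne
  have hc : ∀ x : Fin n, (cpB n a h).col x = (cpB n a' h').col x := fun x => by rw [heq]
  rcases Nat.lt_or_ge a a' with hlt | hge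
  · have := hc ⟨a, Nat.lt_of_succ_lt h⟩
    rw [colB, colB] at this
    simp only [Fin.val_mk] at this
    rw [if_neg (by omega : ¬(a < a ∨ a = a + 1)), if_pos (Or.inl hlt)] at this
    omega
  · have hlt : a' < a := lt_of_le_of_ne hge (Ne.symm hne)
    have := hc ⟨a', Nat.lt_of_succ_lt h'⟩
    rw [colB, colB] at this
    simp only [Fin.val_mk] at this
    rw [if_pos (Or.inl hlt), if_neg (by omega : ¬(a' < a' ∨ a' = a' + 1))] at this
    omega

lemma cpart_ext {n k : ℕ} {σ τ : CPart n k} (hp : σ.part = τ.part) (hc : σ.col = τ.col) :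
    σ = τ := by
  cases σ; cases τ; simp_all

lemma classify {n : ℕ} (σ : CPart n 2) (h11 : ¬ Has11 σ) (h112 : ¬ Has112 σ)
    (h1221 : ¬ Has1221 σ) :
    (∃ m ≤ n, σ = cpA n m) ∨ (∃ a, ∃ h : a + 1 < n, σ = cpB n a h) := by
  have L1 : ∀ i j : Fin n, i < j → SameBlock σ.part i j →
      σ.col i = 1 ∧ σ.col j = 0 := by
    intro i j hij hsb
    have hne : σ.col i ≠ σ.col j := fun e => h11 ⟨i, j, hij, hsb, e⟩
    have hnlt : ¬ σ.col i < σ.col j := fun e => h112 ⟨i, j, hij, hsb, e⟩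
    omega
  have L2 : ∀ i j : Fin n, i < j → ¬ SameBlock σ.part i j → σ.col i ≤ σ.col j := by
    intro i j hij hns
    by_contra hle
    exact h1221 ⟨i, j, hij, hns, not_le.mp hle⟩
  have cons : ∀ i j : Fin n, i < j → SameBlock σ.part i j → j.val = i.val + 1 := by
    intro i j hij hsb
    by_contra hne
    have hij' : i.val < j.val := hij
    have hk : i.val + 1 < j.val := by omega
    set k : Fin n := ⟨i.val + 1, lt_trans hk j.isLt⟩ with hkdef
    have hkval : k.val = i.val + 1 := by rw [hkdef]
    have hik : i < k := by omega
    have hkj : k < j := by omega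
    by_cases hs : SameBlock σ.part i k
    · have e1 := (L1 i k hik hs).2
      have e2 := (L1 k j hkj (sb_trans (sb_symm hs) hsb)).1
      omega
    · have e0 := (L1 i j hij hsb)
      have e1 : σ.col k = 1 := by have := L2 i k hik hs; omega
      by_cases hs2 : SameBlock σ.part k j
      · exact hs (sb_trans hsb (sb_symm hs2))
      · have := L2 k j hkj hs2
        omega
  by_cases hex : ∃ i j : Fin n, i < j ∧ SameBlock σ.part i j
  · -- Case B : a doubleton block exists
    obtain ⟨i, j, hij, hsb⟩ := hex
    have hj := cons i j hij hsb
    have han : i.val + 1 < n := hj ▸ j.isLt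
    have hji : j = ⟨i.val + 1, han⟩ := Fin.ext hj
    have hii : i = ⟨i.val, Nat.lt_of_succ_lt han⟩ := Fin.ext rfl
    obtain ⟨ei, ej⟩ := L1 i j hij hsb
    refine Or.inr ⟨i.val, han, ?_⟩
    have colchar : ∀ x : Fin n, σ.col x = (cpB n i.val han).col x := by
      intro x
      rw [colB]
      by_cases hx1 : x.val < i.val
      · rw [if_pos (Or.inl hx1)]
        have hxj : x < j := by omega
        have hns : ¬ SameBlock σ.part x j := by
          intro hs
          have := (L1 x i (by omega) (sb_trans hs (sb_symm hsb))).2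
          omega
        have := L2 x j hxj hns
        omega
      · by_cases hx2 : x.val = i.val + 1
        · have hxj : x = j := by rw [hji]; exact Fin.ext hx2
          rw [if_pos (Or.inr hx2), hxj, ej]
        · by_cases hx0 : x.val = i.val
          · have hxi : x = i := Fin.ext hx0
            rw [if_neg (by omega), hxi, ei]
          · -- x.val > i.val + 1
            have hix : i < x := by omega
            have hns : ¬ SameBlock σ.part i x := by
              intro hs
              have := cons i x hix hs
              omega
            have := L2 i x hix hns
            rw [if_neg (by omega)]
            omega
    have key : ∀ u v : Fin n, u < v → SameBlock σ.part u v → u = i ∧ v = j := by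
      intro u v huv hsuv
      have hcons := cons u v huv hsuv
      obtain ⟨cu, cv⟩ := L1 u v huv hsuv
      have h1 : ¬ (u.val < i.val ∨ u.val = i.val + 1) := by
        intro hcond
        have := colchar u
        rw [colB, if_pos hcond, cu] at this
        omega
      have h2 : v.val < i.val ∨ v.val = i.val + 1 := by
        by_contra hc
        have := colchar v
        rw [colB, if_neg hc, cv] at this
        omega
      have : u.val = i.val ∧ v.val = i.val + 1 := by omega
      exact ⟨Fin.ext this.1, by rw [hji]; exact Fin.ext this.2⟩
    have pe : σ.part = (cpB n i.val han).part := by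
      apply finpartition_eq_of_sb
      intro x y
      rw [sb_cpB]
      constructor
      · intro hs
        by_cases hxy : x = y
        · exact Or.inl hxy
        · rcases lt_or_gt_of_ne hxy with hl | hl
          · obtain ⟨hx, hy⟩ := key x y hl hs
            exact Or.inr (Or.inl ⟨hx.trans hii, hy.trans hji⟩)
          · obtain ⟨hy', hx'⟩ := key y x hl (sb_symm hs)
            exact Or.inr (Or.inr ⟨hx'.trans hji, hy'.trans hii⟩)
      · rintro (rfl | ⟨rfl, rfl⟩ | ⟨rfl, rfl⟩)
        · exact sb_refl x
        · rw [← hii, ← hji]; exact hsb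
        · rw [← hii, ← hji]; exact sb_symm hsb
    exact cpart_ext pe (funext colchar)
  · -- Case A : all singletons
    push_neg at hex
    have mono : ∀ i j : Fin n, i ≤ j → σ.col i ≤ σ.col j := by
      intro i j hij
      rcases eq_or_lt_of_le hij with rfl | h
      · exact le_rfl
      · exact L2 i j h (hex i j h)
    set m := (Finset.univ.filter fun x : Fin n => σ.col x = 0).card with hm
    have hmn : m ≤ n := le_trans (Finset.card_filter_le _ _) (by simp)
    refine Or.inl ⟨m, hmn, ?_⟩
    have colchar : ∀ x : Fin n, σ.col x = (cpA n m).col x := by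
      intro x
      rw [colA]
      rcases fin2_cases (σ.col x) with h0 | h1
      · rw [h0, if_pos ?_]
        have hsub : Finset.Iic x ⊆ Finset.univ.filter (fun y : Fin n => σ.col y = 0) := by
          intro y hy
          rw [Finset.mem_Iic] at hy
          rw [Finset.mem_filter]
          refine ⟨Finset.mem_univ y, ?_⟩
          have := mono y x hy
          omega
        have := Finset.card_le_card hsub
        rw [Fin.card_Iic] at this
        omega
      · rw [h1, if_neg ?_]
        have hsub : Finset.univ.filter (fun y : Fin n => σ.col y = 0) ⊆ Finset.Iio x := by
          intro y hy
          rw [Finset.mem_filter] at hy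
          rw [Finset.mem_Iio]
          by_contra hc
          have := mono x y (not_lt.mp hc)
          omega
        have := Finset.card_le_card hsub
        rw [Fin.card_Iio] at this
        omega
    have pe : σ.part = (cpA n m).part := by
      apply finpartition_eq_of_sb
      intro x y
      rw [sb_cpA]
      constructor
      · intro hs
        by_contra hne
        rcases lt_or_gt_of_ne hne with hl | hl
        · exact hex x y hl hs
        · exact hex y x hl (sb_symm hs)
      · rintro rfl
        exact sb_refl x
    exact cpart_ext pe (funext colchar)

theorem stmt9 : ∀ n : ℕ, 1 ≤ n →
    Nat.card {σ : CPart n 2 // ¬ Has11 σ ∧ ¬ Has112 σ ∧ ¬ Has1221 σ} = 2 * n := by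
  intro n hn
  have hlt : ∀ a : Fin (n - 1), a.val + 1 < n := fun a => by have := a.isLt; omega
  let f : Fin (n + 1) ⊕ Fin (n - 1) → {σ : CPart n 2 // ¬ Has11 σ ∧ ¬ Has112 σ ∧ ¬ Has1221 σ} :=
    fun t => match t with
    | .inl m => ⟨cpA n m.val, avoidA⟩
    | .inr a => ⟨cpB n a.val (hlt a), avoidB (hlt a)⟩
  have hbij : Function.Bijective f := by
    constructor
    · rintro (m | a) (m' | a') h <;>
        simp only [f, Subtype.mk.injEq] at h
      · exact congrArg _ (Fin.ext (injAA (by omega) (by omega) h))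
      · exact (injAB _ h).elim
      · exact (injAB _ h.symm).elim
      · exact congrArg _ (Fin.ext (injBB _ _ h))
    · rintro ⟨σ, h1, h2, h3⟩
      rcases classify σ h1 h2 h3 with ⟨m, hm, rfl⟩ | ⟨a, ha, rfl⟩
      · exact ⟨.inl ⟨m, by omega⟩, Subtype.ext rfl⟩
      · exact ⟨.inr ⟨a, by omega⟩, Subtype.ext rfl⟩
  have := (Nat.card_eq_of_bijective f hbij).symm
  rw [this, Nat.card_eq_fintype_card, Fintype.card_sum, Fintype.card_fin, Fintype.card_fin]
  omega
end

section
/- For n ≥ 1, the number of 2-colored set partitions of [n] avoiding the three patterns 1^1 1^1, 1^1 1^2, and 1^2 1^1 in the pattern sense equals 2^n; likewise the number avoiding {1^1 1^2, 1^2 1^1, 1^1 2^1} equals 2^n, and the number avoiding {1^1 2^1, 1^1 2^2, 1^2 2^1} equals 2^n. -/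
instance kerDec {α β : Type*} [DecidableEq β] (f : α → β) : DecidableRel (Setoid.ker f).r :=
  fun a b => inferInstanceAs (Decidable (f a = f b))

lemma sameBlock_iff_mem_part {n : ℕ} (P : Finpartition (Finset.univ : Finset (Fin n)))
    (i j : Fin n) : SameBlock P i j ↔ j ∈ P.part i := by
  constructor
  · rintro ⟨b, hb, hi, hj⟩
    rwa [P.part_eq_of_mem hb hi]
  · intro h
    exact ⟨P.part i, P.part_mem.2 (Finset.mem_univ i), P.mem_part (Finset.mem_univ i), h⟩

lemma sameBlock_refl {n : ℕ} (P : Finpartition (Finset.univ : Finset (Fin n))) (i : Fin n) :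
    SameBlock P i i := by
  rw [sameBlock_iff_mem_part]; exact P.mem_part (Finset.mem_univ i)

lemma sameBlock_symm {n : ℕ} {P : Finpartition (Finset.univ : Finset (Fin n))} {i j : Fin n}
    (h : SameBlock P i j) : SameBlock P j i := by
  obtain ⟨b, hb, hi, hj⟩ := h; exact ⟨b, hb, hj, hi⟩

lemma finpartition_eq_of_sameBlock {n : ℕ} {P Q : Finpartition (Finset.univ : Finset (Fin n))}
    (h : ∀ i j, SameBlock P i j ↔ SameBlock Q i j) : P = Q := by
  have hpart : ∀ i, P.part i = Q.part i := fun i => Finset.ext fun j => by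
    rw [← sameBlock_iff_mem_part, ← sameBlock_iff_mem_part, h]
  ext b
  constructor
  · intro hb
    obtain ⟨i, hi⟩ := P.nonempty_of_mem_parts hb
    rw [← P.part_eq_of_mem hb hi, hpart]
    exact Q.part_mem.2 (Finset.mem_univ i)
  · intro hb
    obtain ⟨i, hi⟩ := Q.nonempty_of_mem_parts hb
    rw [← Q.part_eq_of_mem hb hi, ← hpart]
    exact P.part_mem.2 (Finset.mem_univ i)

lemma eq_ofSetoid_ker {n : ℕ} {β : Type*} [DecidableEq β] (f : Fin n → β)
    (P : Finpartition (Finset.univ : Finset (Fin n)))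
    (h : ∀ i j, SameBlock P i j ↔ f i = f j) :
    P = Finpartition.ofSetoid (Setoid.ker f) := by
  apply finpartition_eq_of_sameBlock
  intro i j
  rw [h, sameBlock_iff_mem_part, Finpartition.mem_part_ofSetoid_iff_rel]
  rfl

lemma CPart.ext' {n k : ℕ} {σ τ : CPart n k} (h1 : σ.part = τ.part) (h2 : σ.col = τ.col) :
    σ = τ := by cases σ; cases τ; cases h1; cases h2; rfl

lemma card_cond_eq {n : ℕ} {β : Type} [DecidableEq β] (Cond : CPart n 2 → Prop)
    (F : (Fin n → Fin 2) → Fin n → β)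
    (h : ∀ σ : CPart n 2, Cond σ ↔ ∀ i j, SameBlock σ.part i j ↔ F σ.col i = F σ.col j) :
    Nat.card {σ : CPart n 2 // Cond σ} = 2 ^ n := by
  have e : {σ : CPart n 2 // Cond σ} ≃ (Fin n → Fin 2) :=
    { toFun := fun σ => σ.1.col
      invFun := fun c => ⟨⟨Finpartition.ofSetoid (Setoid.ker (F c)), c⟩, (h _).2 fun i j => by
        rw [sameBlock_iff_mem_part, Finpartition.mem_part_ofSetoid_iff_rel]; rfl⟩
      left_inv := fun σ => Subtype.ext
        (CPart.ext' (eq_ofSetoid_ker (F σ.1.col) σ.1.part ((h _).1 σ.2)).symm rfl)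
      right_inv := fun c => rfl }
  rw [Nat.card_congr e]
  simp [Nat.card_eq_fintype_card]

lemma key1 {n : ℕ} (σ : CPart n 2) :
    (¬ Has11 σ ∧ ¬ Has112 σ ∧ ¬ Has121 σ) ↔ ∀ i j, SameBlock σ.part i j ↔ i = j := by
  constructor
  · rintro ⟨h1, h2, h3⟩ i j
    constructor
    · intro hsb
      by_contra hne
      rcases lt_or_gt_of_ne hne with hlt | hlt
      · rcases lt_trichotomy (σ.col i) (σ.col j) with h | h | h
        · exact h2 ⟨i, j, hlt, hsb, h⟩
        · exact h1 ⟨i, j, hlt, hsb, h⟩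
        · exact h3 ⟨i, j, hlt, hsb, h⟩
      · have hsb' := sameBlock_symm hsb
        rcases lt_trichotomy (σ.col j) (σ.col i) with h | h | h
        · exact h2 ⟨j, i, hlt, hsb', h⟩
        · exact h1 ⟨j, i, hlt, hsb', h⟩
        · exact h3 ⟨j, i, hlt, hsb', h⟩
    · rintro rfl
      exact sameBlock_refl _ _
  · intro h
    refine ⟨?_, ?_, ?_⟩ <;> rintro ⟨i, j, hlt, hsb, -⟩ <;> exact absurd ((h i j).1 hsb) hlt.ne

lemma key2 {n : ℕ} (σ : CPart n 2) :
    (¬ Has112 σ ∧ ¬ Has121 σ ∧ ¬ Has1121 σ) ↔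
      ∀ i j, SameBlock σ.part i j ↔ σ.col i = σ.col j := by
  constructor
  · rintro ⟨h2, h3, h4⟩ i j
    constructor
    · intro hsb
      by_contra hne
      rcases lt_trichotomy i j with hlt | rfl | hlt
      · rcases lt_or_gt_of_ne hne with h | h
        · exact h2 ⟨i, j, hlt, hsb, h⟩
        · exact h3 ⟨i, j, hlt, hsb, h⟩
      · exact hne rfl
      · have hsb' := sameBlock_symm hsb
        rcases lt_or_gt_of_ne (Ne.symm hne) with h | h
        · exact h2 ⟨j, i, hlt, hsb', h⟩
        · exact h3 ⟨j, i, hlt, hsb', h⟩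
    · intro hcol
      by_contra hsb
      rcases lt_trichotomy i j with hlt | rfl | hlt
      · exact h4 ⟨i, j, hlt, hsb, hcol⟩
      · exact hsb (sameBlock_refl _ _)
      · exact h4 ⟨j, i, hlt, fun hs => hsb (sameBlock_symm hs), hcol.symm⟩
  · intro h
    refine ⟨?_, ?_, ?_⟩
    · rintro ⟨i, j, hlt, hsb, hc⟩
      exact absurd ((h i j).1 hsb) hc.ne
    · rintro ⟨i, j, hlt, hsb, hc⟩
      exact absurd ((h i j).1 hsb) hc.ne'
    · rintro ⟨i, j, hlt, hsb, hc⟩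
      exact hsb ((h i j).2 hc)

lemma key3 {n : ℕ} (σ : CPart n 2) :
    (¬ Has1121 σ ∧ ¬ Has1122 σ ∧ ¬ Has1221 σ) ↔ ∀ i j, SameBlock σ.part i j := by
  constructor
  · rintro ⟨h1, h2, h3⟩ i j
    rcases lt_trichotomy i j with hlt | rfl | hlt
    · by_contra hsb
      rcases lt_trichotomy (σ.col i) (σ.col j) with h | h | h
      · exact h2 ⟨i, j, hlt, hsb, h⟩
      · exact h1 ⟨i, j, hlt, hsb, h⟩
      · exact h3 ⟨i, j, hlt, hsb, h⟩
    · exact sameBlock_refl _ _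
    · by_contra hsb
      have hsb' : ¬ SameBlock σ.part j i := fun h => hsb (sameBlock_symm h)
      rcases lt_trichotomy (σ.col j) (σ.col i) with h | h | h
      · exact h2 ⟨j, i, hlt, hsb', h⟩
      · exact h1 ⟨j, i, hlt, hsb', h⟩
      · exact h3 ⟨j, i, hlt, hsb', h⟩
  · intro h
    refine ⟨?_, ?_, ?_⟩ <;> rintro ⟨i, j, hlt, hsb, -⟩ <;> exact hsb (h i j)

theorem stmt10 : ∀ n : ℕ, 1 ≤ n →
    Nat.card {σ : CPart n 2 // ¬ Has11 σ ∧ ¬ Has112 σ ∧ ¬ Has121 σ} = 2 ^ n ∧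
    Nat.card {σ : CPart n 2 // ¬ Has112 σ ∧ ¬ Has121 σ ∧ ¬ Has1121 σ} = 2 ^ n ∧
    Nat.card {σ : CPart n 2 // ¬ Has1121 σ ∧ ¬ Has1122 σ ∧ ¬ Has1221 σ} = 2 ^ n := by
  intro n _
  refine ⟨?_, ?_, ?_⟩
  · exact card_cond_eq _ (fun _ => (id : Fin n → Fin n)) (fun σ => by simpa using key1 σ)
  · exact card_cond_eq _ (fun c => c) (fun σ => key2 σ)
  · exact card_cond_eq _ (fun _ _ => (0 : Fin 1)) (fun σ => by simpa using key3 σ)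
end

section
/- For n ≥ 1 and k ≥ 1, the number of k-colored set partitions of [n] avoiding the three patterns 1^1 1^2, 1^1 2^2, and 1^2 1^1 in the pattern sense equals the sum of B(i_1)·B(i_2)···B(i_k) over all compositions i_1 + i_2 + ... + i_k = n with i_j ≥ 0, where B denotes the Bell numbers. -/
open Finset

section PartMap
variable {α β : Type*} [DecidableEq α] [DecidableEq β] {s : Finset α} {t : Finset β}

/-- Push a finpartition of `s` forward along maps that are mutually inverse bijections
between `s` and `t`. -/
def partMap (g : α → β) (g' : β → α)
    (hgt : ∀ x ∈ s, g x ∈ t) (hg' : ∀ x ∈ s, g' (g x) = x)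
    (hg't : ∀ y ∈ t, g' y ∈ s) (hg : ∀ y ∈ t, g (g' y) = y)
    (P : Finpartition s) : Finpartition t where
  parts := P.parts.image (Finset.image g)
  supIndep := by
    have hinj : Set.InjOn g ↑s := fun a ha b hb h => by
      rw [← hg' a ha, h, hg' b hb]
    rw [Finset.supIndep_iff_pairwiseDisjoint]
    rintro u hu v hv huv
    simp only [Function.onFun, id_eq]
    simp only [coe_image, Set.mem_image, Finset.mem_coe] at hu hv
    obtain ⟨a, ha, rfl⟩ := hu
    obtain ⟨b, hb, rfl⟩ := hv
    have hab : a ≠ b := by rintro rfl; exact huv rfl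
    have hd : Disjoint a b := P.disjoint ha hb hab
    rw [Finset.disjoint_left] at hd ⊢
    rintro x hx hx'
    rw [Finset.mem_image] at hx hx'
    obtain ⟨p, hp, rfl⟩ := hx
    obtain ⟨q, hq, hqe⟩ := hx'
    have hps : p ∈ s := P.le ha hp
    have hqs : q ∈ s := P.le hb hq
    have : q = p := hinj hqs hps hqe
    exact hd hp (this ▸ hq)
  sup_parts := by
    rw [Finset.sup_image]
    apply Finset.Subset.antisymm
    · intro y hy
      rw [Finset.mem_sup] at hy
      obtain ⟨b, hb, hyb⟩ := hy
      simp only [Function.comp, id_eq, Finset.mem_image] at hyb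
      obtain ⟨x, hx, rfl⟩ := hyb
      exact hgt x (P.le hb hx)
    · intro y hy
      rw [Finset.mem_sup]
      have hys : g' y ∈ s := hg't y hy
      obtain ⟨b, hb, hyb⟩ := P.exists_mem hys
      exact ⟨b, hb, by
        simp only [Function.comp, id_eq, Finset.mem_image]
        exact ⟨g' y, hyb, hg y hy⟩⟩
  bot_notMem := by
    intro h
    rw [Finset.bot_eq_empty, Finset.mem_image] at h
    obtain ⟨b, hb, hbe⟩ := h
    rw [Finset.image_eq_empty] at hbe
    apply P.bot_notMem
    rw [Finset.bot_eq_empty, ← hbe]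
    exact hb

theorem partMap_partMap (g : α → β) (g' : β → α)
    (hgt : ∀ x ∈ s, g x ∈ t) (hg' : ∀ x ∈ s, g' (g x) = x)
    (hg't : ∀ y ∈ t, g' y ∈ s) (hg : ∀ y ∈ t, g (g' y) = y)
    (P : Finpartition s) :
    partMap g' g hg't hg hgt hg' (partMap g g' hgt hg' hg't hg P) = P := by
  apply Finpartition.ext
  show ((P.parts.image (Finset.image g)).image (Finset.image g')) = P.parts
  rw [Finset.image_image]
  have key : ∀ b ∈ P.parts, (Finset.image g' ∘ Finset.image g) b = id b := by
    intro b hb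
    simp only [Function.comp_apply, Finset.image_image, id_eq]
    conv_rhs => rw [← Finset.image_id (s := b)]
    apply Finset.image_congr
    intro x hx
    exact hg' x (P.le hb (Finset.mem_coe.mp hx))
  rw [Finset.image_congr key, Finset.image_id]

/-- Equivalence of finpartitions along a bijection between `s` and `t`. -/
def partEquiv (g : α → β) (g' : β → α)
    (hgt : ∀ x ∈ s, g x ∈ t) (hg' : ∀ x ∈ s, g' (g x) = x)
    (hg't : ∀ y ∈ t, g' y ∈ s) (hg : ∀ y ∈ t, g (g' y) = y) :
    Finpartition s ≃ Finpartition t where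
  toFun := partMap g g' hgt hg' hg't hg
  invFun := partMap g' g hg't hg hgt hg'
  left_inv := partMap_partMap g g' hgt hg' hg't hg
  right_inv := partMap_partMap g' g hg't hg hgt hg'

end PartMap


theorem card_finpartition {n : ℕ} (s : Finset (Fin n)) :
    Nat.card (Finpartition s) = bell s.card := by
  rcases Finset.eq_empty_or_nonempty s with rfl | hs
  · have h1 : Nat.card (Finpartition (∅ : Finset (Fin n))) = 1 := by
      have : (∅ : Finset (Fin n)) = ⊥ := rfl
      rw [this]
      exact Nat.card_unique
    have h2 : bell (Finset.card (∅ : Finset (Fin n))) = 1 := by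
      rw [Finset.card_empty, bell]
      have : (Finset.univ : Finset (Fin 0)) = ⊥ := rfl
      rw [this]
      exact Nat.card_unique
    rw [h1, h2]
  · set m := s.card with hm
    have hmpos : 0 < m := Finset.card_pos.mpr hs
    have e := s.orderIsoOfFin hm.symm
    set g : Fin n → Fin m := fun x => if h : x ∈ s then e.symm ⟨x, h⟩ else ⟨0, hmpos⟩ with hgdef
    set g' : Fin m → Fin n := fun y => (e y : Fin n) with hg'def
    have hgt : ∀ x ∈ s, g x ∈ (Finset.univ : Finset (Fin m)) := fun x _ => Finset.mem_univ _
    have hg' : ∀ x ∈ s, g' (g x) = x := by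
      intro x hx
      simp only [hgdef, hg'def, dif_pos hx]
      rw [OrderIso.apply_symm_apply]
    have hg't : ∀ y ∈ (Finset.univ : Finset (Fin m)), g' y ∈ s := fun y _ => (e y).2
    have hg : ∀ y ∈ (Finset.univ : Finset (Fin m)), g (g' y) = y := by
      intro y _
      simp only [hgdef, hg'def, dif_pos (e y).2]
      have : (⟨(e y : Fin n), (e y).2⟩ : {x // x ∈ s}) = e y := rfl
      rw [this, OrderIso.symm_apply_apply]
    exact Nat.card_congr (partEquiv g g' hgt hg' hg't hg)


open Finset

variable {n k : ℕ}

def fiber (c : Fin n → Fin k) (i : Fin k) : Finset (Fin n) :=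
  Finset.univ.filter (fun x => c x = i)

def Mono (c : Fin n → Fin k) (P : Finpartition (Finset.univ : Finset (Fin n))) : Prop :=
  ∀ b ∈ P.parts, ∀ x ∈ b, ∀ y ∈ b, c x = c y

theorem mem_fiber {c : Fin n → Fin k} {i : Fin k} {x : Fin n} : x ∈ fiber c i ↔ c x = i := by
  simp [fiber]

/-- Restrict a monochromatic partition to the fiber of color `i`. -/
def restrictPart (c : Fin n → Fin k) (P : Finpartition (Finset.univ : Finset (Fin n)))
    (hP : Mono c P) (i : Fin k) : Finpartition (fiber c i) where
  parts := P.parts.filter (· ⊆ fiber c i)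
  supIndep := by
    rw [Finset.supIndep_iff_pairwiseDisjoint]
    rintro u hu v hv huv
    simp only [coe_filter, Set.mem_setOf_eq] at hu hv
    exact P.disjoint hu.1 hv.1 huv
  sup_parts := by
    apply Finset.Subset.antisymm
    · intro y hy
      rw [Finset.mem_sup] at hy
      obtain ⟨b, hb, hyb⟩ := hy
      exact (Finset.mem_filter.mp hb).2 hyb
    · intro y hy
      rw [Finset.mem_sup]
      obtain ⟨b, hb, hyb⟩ := P.exists_mem (Finset.mem_univ y)
      refine ⟨b, Finset.mem_filter.mpr ⟨hb, fun z hz => ?_⟩, hyb⟩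
      rw [mem_fiber, ← mem_fiber.mp hy]
      exact hP b hb z hz y hyb
  bot_notMem := fun h => P.bot_notMem (Finset.mem_filter.mp h).1

/-- Glue a family of partitions of the fibers to a partition of the whole. -/
def gluePart (c : Fin n → Fin k) (Q : ∀ i, Finpartition (fiber c i)) :
    Finpartition (Finset.univ : Finset (Fin n)) where
  parts := Finset.univ.biUnion (fun i => (Q i).parts)
  supIndep := by
    rw [Finset.supIndep_iff_pairwiseDisjoint]
    rintro u hu v hv huv
    simp only [coe_biUnion, Set.mem_iUnion, Finset.mem_coe, coe_univ, Set.mem_univ,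
      exists_true_left, true_and] at hu hv
    obtain ⟨i, hi⟩ := hu
    obtain ⟨j, hj⟩ := hv
    rcases eq_or_ne i j with rfl | hij
    · exact (Q i).disjoint hi hj huv
    · have h1 : u ⊆ fiber c i := (Q i).le hi
      have h2 : v ⊆ fiber c j := (Q j).le hj
      have : Disjoint (fiber c i) (fiber c j) := by
        rw [Finset.disjoint_left]
        intro a ha ha'
        exact hij (mem_fiber.mp ha ▸ mem_fiber.mp ha' ▸ rfl)
      exact this.mono h1 h2
  sup_parts := by
    apply Finset.Subset.antisymm
    · exact Finset.subset_univ _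
    · intro y _
      rw [Finset.mem_sup]
      obtain ⟨b, hb, hyb⟩ := (Q (c y)).exists_mem (mem_fiber.mpr rfl)
      exact ⟨b, Finset.mem_biUnion.mpr ⟨c y, Finset.mem_univ _, hb⟩, hyb⟩
  bot_notMem := fun h => by
    obtain ⟨i, _, hi⟩ := Finset.mem_biUnion.mp h
    exact (Q i).bot_notMem hi

theorem mono_gluePart (c : Fin n → Fin k) (Q : ∀ i, Finpartition (fiber c i)) :
    Mono c (gluePart c Q) := by
  intro b hb x hx y hy
  obtain ⟨i, _, hi⟩ := Finset.mem_biUnion.mp hb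
  have hsub : b ⊆ fiber c i := (Q i).le hi
  rw [mem_fiber.mp (hsub hx), mem_fiber.mp (hsub hy)]

/-- Monochromatic partitions correspond to families of partitions of the fibers. -/
noncomputable def monoEquiv (c : Fin n → Fin k) :
    {P : Finpartition (Finset.univ : Finset (Fin n)) // Mono c P} ≃
      ∀ i, Finpartition (fiber c i) where
  toFun := fun ⟨P, hP⟩ => restrictPart c P hP
  invFun := fun Q => ⟨gluePart c Q, mono_gluePart c Q⟩
  left_inv := by
    rintro ⟨P, hP⟩
    apply Subtype.ext
    apply Finpartition.ext
    show Finset.univ.biUnion (fun i => (restrictPart c P hP i).parts) = P.parts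
    apply Finset.Subset.antisymm
    · intro b hb
      obtain ⟨i, _, hi⟩ := Finset.mem_biUnion.mp hb
      exact (Finset.mem_filter.mp hi).1
    · intro b hb
      obtain ⟨x, hx⟩ := Finpartition.nonempty_of_mem_parts P hb
      refine Finset.mem_biUnion.mpr ⟨c x, Finset.mem_univ _, Finset.mem_filter.mpr ⟨hb, ?_⟩⟩
      intro z hz
      rw [mem_fiber]
      exact hP b hb z hz x hx
  right_inv := by
    intro Q
    funext i
    apply Finpartition.ext
    show (Finset.univ.biUnion (fun j => (Q j).parts)).filter (· ⊆ fiber c i) = (Q i).parts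
    apply Finset.Subset.antisymm
    · intro b hb
      obtain ⟨hb1, hb2⟩ := Finset.mem_filter.mp hb
      obtain ⟨j, _, hj⟩ := Finset.mem_biUnion.mp hb1
      obtain ⟨x, hx⟩ := Finpartition.nonempty_of_mem_parts _ hj
      have hij : j = i := by
        rw [← mem_fiber.mp ((Q j).le hj hx), mem_fiber.mp (hb2 hx)]
      exact hij ▸ hj
    · intro b hb
      exact Finset.mem_filter.mpr
        ⟨Finset.mem_biUnion.mpr ⟨i, Finset.mem_univ _, hb⟩, (Q i).le hb⟩



/-- Fiber cardinalities of a coloring. -/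
def fib (c : Fin n → Fin k) (i : Fin k) : ℕ := (fiber c i).card

/-- Tail sums of a composition. -/
def Mtail (f : Fin k → ℕ) (m : ℕ) : ℕ := ∑ i ∈ Finset.univ.filter (fun i : Fin k => m ≤ i.val), f i

theorem card_filter_val_lt {v : ℕ} (hv : v ≤ n) :
    (Finset.univ.filter fun x : Fin n => x.val < v).card = v := by
  rw [show (Finset.univ.filter fun x : Fin n => x.val < v) =
      (Finset.range v).attachFin (fun m hm => lt_of_lt_of_le (Finset.mem_range.mp hm) hv) from ?_]
  · rw [Finset.card_attachFin, Finset.card_range]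
  · ext x
    simp [Finset.mem_attachFin]
theorem sum_fib (c : Fin n → Fin k) : ∑ i, fib c i = n := by
  have := Finset.card_eq_sum_card_fiberwise
    (f := c) (s := (Finset.univ : Finset (Fin n))) (t := Finset.univ) (fun x _ => mem_univ _)
  simpa [fib, fiber, Finset.card_univ] using this.symm

theorem tail_card (c : Fin n → Fin k) (m : ℕ) :
    (Finset.univ.filter fun x : Fin n => m ≤ (c x).val).card = Mtail (fib c) m := by
  rw [Mtail]
  rw [Finset.card_eq_sum_card_fiberwise
    (f := c) (t := Finset.univ.filter (fun i : Fin k => m ≤ i.val))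
    (fun x hx => by simpa using (Finset.mem_filter.mp hx).2)]
  apply Finset.sum_congr rfl
  intro i hi
  have him : m ≤ i.val := (Finset.mem_filter.mp hi).2
  congr 1
  ext x
  simp only [fiber, Finset.mem_filter, Finset.mem_univ, true_and]
  constructor
  · rintro ⟨_, h⟩; exact h
  · intro h; exact ⟨h ▸ him, h⟩

theorem Mtail_of_ge (f : Fin k → ℕ) {m : ℕ} (h : k ≤ m) : Mtail f m = 0 := by
  rw [Mtail, Finset.filter_false_of_mem, Finset.sum_empty]
  intro i _
  simp only [not_le]
  exact lt_of_lt_of_le i.isLt h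

theorem Mtail_succ (f : Fin k → ℕ) {m : ℕ} (h : m < k) :
    Mtail f m = f ⟨m, h⟩ + Mtail f (m + 1) := by
  rw [Mtail, Mtail, show (Finset.univ.filter fun i : Fin k => m ≤ i.val) =
      insert ⟨m, h⟩ (Finset.univ.filter fun i : Fin k => m + 1 ≤ i.val) from ?_]
  · rw [Finset.sum_insert (by simp)]
  · ext i
    simp only [Finset.mem_filter, Finset.mem_univ, true_and, Finset.mem_insert]
    constructor
    · intro hm
      rcases eq_or_lt_of_le hm with he | hlt
      · left; exact Fin.ext he.symm
      · right; exact hlt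
    · rintro (rfl | hm)
      · exact le_refl _
      · exact le_of_lt (Nat.lt_of_succ_le hm)

theorem Mtail_inj {f g : Fin k → ℕ} (h : ∀ m, Mtail f m = Mtail g m) : f = g := by
  funext i
  have h1 := Mtail_succ f i.isLt
  have h2 := Mtail_succ g i.isLt
  have : f ⟨i.val, i.isLt⟩ + Mtail f (i.val + 1) = g ⟨i.val, i.isLt⟩ + Mtail g (i.val + 1) := by
    rw [← h1, ← h2, h]
  rw [h (i.val + 1)] at this
  simpa using Nat.add_right_cancel this

theorem downward_closed_iff {D : Finset (Fin n)} (hD : ∀ x y : Fin n, x ≤ y → y ∈ D → x ∈ D)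
    (x : Fin n) : x ∈ D ↔ x.val < D.card := by
  constructor
  · intro hx
    have hsub : (Finset.univ.filter fun y : Fin n => y.val < x.val + 1) ⊆ D := by
      intro y hy
      have : y ≤ x := by
        rw [Fin.le_def]
        exact Nat.lt_succ_iff.mp (Finset.mem_filter.mp hy).2
      exact hD y x this hx
    have := Finset.card_le_card hsub
    rwa [card_filter_val_lt x.isLt] at this
  · intro hx
    by_contra hxD
    have hsub : D ⊆ Finset.univ.filter fun y : Fin n => y.val < x.val := by
      intro y hy
      simp only [Finset.mem_filter, Finset.mem_univ, true_and]
      by_contra hyx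
      exact hxD (hD x y (Fin.le_def.mpr (le_of_not_gt hyx)) hy)
    have := Finset.card_le_card hsub
    rw [card_filter_val_lt (le_of_lt x.isLt)] at this
    omega

theorem antitone_mem_iff {c : Fin n → Fin k} (hc : Antitone c) (t : Fin k) (x : Fin n) :
    t ≤ c x ↔ x.val < Mtail (fib c) t.val := by
  have hD : ∀ x y : Fin n, x ≤ y → y ∈ (Finset.univ.filter fun z => t ≤ c z) →
      x ∈ (Finset.univ.filter fun z => t ≤ c z) := by
    intro x y hxy hy
    simp only [Finset.mem_filter, Finset.mem_univ, true_and] at hy ⊢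
    exact le_trans hy (hc hxy)
  have hcard : (Finset.univ.filter fun z : Fin n => t ≤ c z).card = Mtail (fib c) t.val := by
    rw [← tail_card]
    congr 1
  have key := downward_closed_iff hD x
  rw [hcard] at key
  constructor
  · intro h
    exact key.mp (by simp only [Finset.mem_filter, Finset.mem_univ, true_and]; exact h)
  · intro h
    have := key.mpr h
    simp only [Finset.mem_filter, Finset.mem_univ, true_and] at this
    exact this

theorem antitone_fib_inj {c c' : Fin n → Fin k} (hc : Antitone c) (hc' : Antitone c')
    (h : fib c = fib c') : c = c' := by
  funext x
  apply le_antisymm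
  · rw [antitone_mem_iff hc' (c x) x, ← h]
    exact (antitone_mem_iff hc (c x) x).mp le_rfl
  · rw [antitone_mem_iff hc (c' x) x, h]
    exact (antitone_mem_iff hc' (c' x) x).mp le_rfl

section Exists
variable (hk : 0 < k) {f : Fin k → ℕ} (hsum : ∑ i, f i = n)

theorem Mtail_zero : Mtail f 0 = ∑ i, f i := by
  rw [Mtail]
  congr 1
  simp

theorem Mtail_anti {m m' : ℕ} (h : m ≤ m') : Mtail f m' ≤ Mtail f m :=
  Finset.sum_le_sum_of_subset (fun i hi => by
    simp only [Finset.mem_filter, Finset.mem_univ, true_and] at hi ⊢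
    omega)

/-- The antitone coloring with prescribed fiber sizes. -/
noncomputable def cOf (f : Fin k → ℕ) (hk : 0 < k) (hsum : ∑ i, f i = n) (x : Fin n) : Fin k :=
  (Finset.univ.filter fun t : Fin k => x.val < Mtail f t.val).max'
    ⟨⟨0, hk⟩, by
      simp only [Finset.mem_filter, Finset.mem_univ, true_and]
      rw [Mtail_zero, hsum]
      exact x.isLt⟩

theorem cOf_le_iff (t : Fin k) (x : Fin n) :
    t ≤ cOf f hk hsum x ↔ x.val < Mtail f t.val := by
  constructor
  · intro ht
    have hmem := Finset.max'_mem (Finset.univ.filter fun t : Fin k => x.val < Mtail f t.val)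
      ⟨⟨0, hk⟩, by
        simp only [Finset.mem_filter, Finset.mem_univ, true_and]
        rw [Mtail_zero, hsum]
        exact x.isLt⟩
    have : x.val < Mtail f (cOf f hk hsum x).val := (Finset.mem_filter.mp hmem).2
    exact lt_of_lt_of_le this (Mtail_anti (Fin.le_def.mp ht))
  · intro hx
    exact Finset.le_max' _ t (by simp only [Finset.mem_filter, Finset.mem_univ, true_and]; exact hx)

theorem cOf_antitone : Antitone (cOf f hk hsum) := by
  intro x y hxy
  rw [cOf_le_iff hk hsum]
  exact lt_of_le_of_lt hxy ((cOf_le_iff hk hsum (cOf f hk hsum y) y).mp le_rfl)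

theorem fib_cOf : fib (cOf f hk hsum) = f := by
  apply Mtail_inj
  intro m
  rcases lt_or_ge m k with hm | hm
  · rw [← tail_card]
    have hMle : Mtail f m ≤ n := by
      rw [← hsum, ← Mtail_zero]
      exact Mtail_anti (Nat.zero_le m)
    rw [show (Finset.univ.filter fun x : Fin n => m ≤ (cOf f hk hsum x).val) =
        (Finset.univ.filter fun x : Fin n => x.val < Mtail f m) from ?_]
    · rw [card_filter_val_lt hMle]
    · ext x
      simp only [Finset.mem_filter, Finset.mem_univ, true_and]
      rw [show m = (⟨m, hm⟩ : Fin k).val from rfl, ← Fin.le_def, cOf_le_iff hk hsum]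
  · rw [Mtail_of_ge _ hm, Mtail_of_ge _ hm]
end Exists


theorem avoid_iff {n k : ℕ} (σ : CPart n k) :
    (¬ Has112 σ ∧ ¬ Has1122 σ ∧ ¬ Has121 σ) ↔ Antitone σ.col ∧ Mono σ.col σ.part := by
  constructor
  · rintro ⟨h1, h2, h3⟩
    have hmono : Mono σ.col σ.part := by
      intro b hb x hx y hy
      rcases lt_trichotomy x y with hxy | rfl | hyx
      · refine le_antisymm ?_ ?_
        · by_contra h
          exact h3 ⟨x, y, hxy, ⟨b, hb, hx, hy⟩, lt_of_not_ge h⟩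
        · by_contra h
          exact h1 ⟨x, y, hxy, ⟨b, hb, hx, hy⟩, lt_of_not_ge h⟩
      · rfl
      · refine le_antisymm ?_ ?_
        · by_contra h
          exact h1 ⟨y, x, hyx, ⟨b, hb, hy, hx⟩, lt_of_not_ge h⟩
        · by_contra h
          exact h3 ⟨y, x, hyx, ⟨b, hb, hy, hx⟩, lt_of_not_ge h⟩
    refine ⟨?_, hmono⟩
    intro x y hxy
    rcases eq_or_lt_of_le hxy with rfl | hlt
    · exact le_rfl
    · by_contra h
      have hcol : σ.col x < σ.col y := lt_of_not_ge h
      by_cases hsb : SameBlock σ.part x y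
      · exact h1 ⟨x, y, hlt, hsb, hcol⟩
      · exact h2 ⟨x, y, hlt, hsb, hcol⟩
  · rintro ⟨ha, hm⟩
    refine ⟨?_, ?_, ?_⟩
    · rintro ⟨i, j, hij, ⟨b, hb, hi, hj⟩, hcol⟩
      exact absurd (hm b hb i hi j hj) (ne_of_lt hcol)
    · rintro ⟨i, j, hij, _, hcol⟩
      exact absurd (ha hij.le) (not_le.mpr hcol)
    · rintro ⟨i, j, hij, ⟨b, hb, hi, hj⟩, hcol⟩
      exact absurd (hm b hb i hi j hj) (ne_of_gt hcol)

/-- Decompose an avoiding colored partition into its coloring and partition. -/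
def avoidEquiv (n k : ℕ) :
    {σ : CPart n k // ¬ Has112 σ ∧ ¬ Has1122 σ ∧ ¬ Has121 σ} ≃
      Σ c : Fin n → Fin k,
        {P : Finpartition (Finset.univ : Finset (Fin n)) // Antitone c ∧ Mono c P} where
  toFun := fun σ => ⟨σ.1.col, σ.1.part, (avoid_iff σ.1).mp σ.2⟩
  invFun := fun x => ⟨⟨x.2.1, x.1⟩, (avoid_iff _).mpr x.2.2⟩
  left_inv := by rintro ⟨⟨P, c⟩, h⟩; rfl
  right_inv := by rintro ⟨c, P, h⟩; rfl

theorem natcard_sigma {ι : Type*} [Fintype ι] (β : ι → Type*) [∀ i, Finite (β i)] :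
    Nat.card (Σ i, β i) = ∑ i, Nat.card (β i) := by
  classical
  letI : ∀ i, Fintype (β i) := fun i => Fintype.ofFinite _
  simp only [Nat.card_eq_fintype_card]
  exact Fintype.card_sigma

theorem stmt16 : ∀ n k : ℕ, 1 ≤ n → 1 ≤ k →
    Nat.card {σ : CPart n k // ¬ Has112 σ ∧ ¬ Has1122 σ ∧ ¬ Has121 σ} =
      ∑ f ∈ Finset.filter (fun f => ∑ i, f i = n)
          (Fintype.piFinset fun _ : Fin k => Finset.range (n + 1)),
        ∏ i, bell (f i) := by
  intro n k hn hk
  classical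
  rw [Nat.card_congr (avoidEquiv n k), natcard_sigma]
  have hterm : ∀ c : Fin n → Fin k,
      Nat.card {P : Finpartition (Finset.univ : Finset (Fin n)) // Antitone c ∧ Mono c P} =
        if Antitone c then ∏ i, bell (fib c i) else 0 := by
    intro c
    by_cases hc : Antitone c
    · rw [if_pos hc]
      have e1 : {P : Finpartition (Finset.univ : Finset (Fin n)) // Antitone c ∧ Mono c P} ≃
          {P : Finpartition (Finset.univ : Finset (Fin n)) // Mono c P} :=
        Equiv.subtypeEquivRight (fun P => and_iff_right hc)
      rw [Nat.card_congr (e1.trans (monoEquiv c)), Nat.card_pi]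
      exact Finset.prod_congr rfl fun i _ => card_finpartition (fiber c i)
    · rw [if_neg hc]
      haveI : IsEmpty {P : Finpartition (Finset.univ : Finset (Fin n)) //
          Antitone c ∧ Mono c P} := ⟨fun P => hc P.2.1⟩
      exact Nat.card_of_isEmpty
  rw [Finset.sum_congr rfl (fun c _ => hterm c), ← Finset.sum_filter]
  have hmaps : ∀ c ∈ Finset.univ.filter (fun c : Fin n → Fin k => Antitone c),
      fib c ∈ Finset.filter (fun f => ∑ i, f i = n)
        (Fintype.piFinset fun _ : Fin k => Finset.range (n + 1)) := by
    intro c _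
    rw [Finset.mem_filter]
    refine ⟨Fintype.mem_piFinset.mpr fun i => ?_, sum_fib c⟩
    rw [Finset.mem_range, Nat.lt_succ_iff]
    calc fib c i ≤ (Finset.univ : Finset (Fin n)).card := Finset.card_filter_le _ _
      _ = n := by simp
  rw [← Finset.sum_fiberwise_of_maps_to hmaps (fun c => ∏ i, bell (fib c i))]
  apply Finset.sum_congr rfl
  intro f hf
  rw [Finset.mem_filter] at hf
  have hsum : ∑ i, f i = n := hf.2
  have hkpos : 0 < k := hk
  have hset : (Finset.univ.filter (fun c : Fin n → Fin k => Antitone c)).filter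
      (fun c => fib c = f) = {cOf f hkpos hsum} := by
    ext c
    simp only [Finset.mem_filter, Finset.mem_univ, true_and, Finset.mem_singleton]
    constructor
    · rintro ⟨hA, hfib⟩
      exact antitone_fib_inj hA (cOf_antitone hkpos hsum)
        (by rw [hfib, fib_cOf hkpos hsum])
    · rintro rfl
      exact ⟨cOf_antitone hkpos hsum, fib_cOf hkpos hsum⟩
  rw [hset, Finset.sum_singleton, fib_cOf hkpos hsum]
end
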